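/- arXiv:1005.3661 — 7 statements merged into one kernel-verified Lean document; each statement's English description precedes it below -/
import Mathlib

section
/- Let μ₀ be a probability measure on ℝ with M(λ) = ∫ e^{λx} dμ₀(x) < ∞ for all λ ∈ ℝ, and let w := sup(supp μ₀) with μ₀({w}) > 0 and w < ∞. Then lim_{β→∞} M(2β)/M(β)² = 1/μ₀({w}). -/
open MeasureTheory Filter Real Set
open scoped ENNReal NNReal Topology

open Classical in
/-- Relative entropy `h(μ | ν) = ∫ log(dμ/dν) dμ` when `μ ≪ ν` (and the integral exists),
and `+∞` otherwise. -/
noncomputable def relEnt {α : Type*} [MeasurableSpace α] (μ ν : Measure α) : ℝ≥0∞ :=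
  if μ ≪ ν ∧ Integrable (llr μ ν) μ then ENNReal.ofReal (∫ x, llr μ ν x ∂μ) else ⊤

/-- Let `μ₀` be a probability measure on `ℝ` with `M(λ) = ∫ e^{λx} dμ₀ < ∞`
for all `λ`, and let `w = sup (supp μ₀)` be finite with `μ₀({w}) > 0`
(encoded by `μ₀({w}) ≠ 0` and `μ₀((w,∞)) = 0`). Then
`lim_{β→∞} M(2β)/M(β)² = 1/μ₀({w})`. -/
theorem stmt3 (μ₀ : Measure ℝ) [IsProbabilityMeasure μ₀]
    (hM : ∀ lam : ℝ, Integrable (fun x => Real.exp (lam * x)) μ₀)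
    (w : ℝ) (hw : μ₀ {w} ≠ 0) (hsupp : μ₀ (Set.Ioi w) = 0) :
    Tendsto (fun β : ℝ =>
        (∫ x, Real.exp ((2 * β) * x) ∂μ₀) / (∫ x, Real.exp (β * x) ∂μ₀) ^ 2)
      atTop (𝓝 (1 / (μ₀ {w}).toReal)) := by
  set p := (μ₀ {w}).toReal with hp
  have hp0 : 0 < p := ENNReal.toReal_pos hw (measure_ne_top _ _)
  have hle : ∀ᵐ x ∂μ₀, x ≤ w := by
    rw [ae_iff]
    convert hsupp using 2
    ext x; simp [Set.mem_Ioi, not_le]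
  -- key convergence: ∫ exp (β (x - w)) → p
  have hmeas : ∀ β : ℝ, AEStronglyMeasurable (fun x => Real.exp (β * (x - w))) μ₀ :=
    fun β => (Real.continuous_exp.comp (continuous_const.mul (continuous_id.sub
      continuous_const))).aestronglyMeasurable
  have hind : ∫ x, Set.indicator {w} (fun _ => (1:ℝ)) x ∂μ₀ = p := by
    rw [MeasureTheory.integral_indicator (measurableSet_singleton w)]
    simp [hp]
  have key : Tendsto (fun β : ℝ => ∫ x, Real.exp (β * (x - w)) ∂μ₀) atTop (𝓝 p) := by
    rw [← hind]
    apply MeasureTheory.tendsto_integral_filter_of_dominated_convergence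
      (fun _ => (1:ℝ))
    · exact Eventually.of_forall fun β => hmeas β
    · filter_upwards [eventually_ge_atTop (0:ℝ)] with β hβ
      filter_upwards [hle] with x hx
      rw [Real.norm_eq_abs, abs_of_pos (Real.exp_pos _)]
      exact Real.exp_le_one_iff.mpr (mul_nonpos_of_nonneg_of_nonpos hβ (by linarith))
    · exact integrable_const 1
    · filter_upwards [hle] with x hx
      rcases eq_or_lt_of_le hx with heq | hlt
      · simp [heq, Set.indicator_of_mem]
      · have h1 : Tendsto (fun β : ℝ => β * (x - w)) atTop atBot :=
          tendsto_id.atTop_mul_const_of_neg (by linarith)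
        have hx0 : x ∉ ({w} : Set ℝ) := by simpa using hlt.ne
        rw [Set.indicator_of_notMem hx0]
        exact Real.tendsto_exp_atBot.comp h1
  -- rewrite M(β)
  have hrw : ∀ β : ℝ, ∫ x, Real.exp (β * x) ∂μ₀
      = Real.exp (β * w) * ∫ x, Real.exp (β * (x - w)) ∂μ₀ := by
    intro β
    rw [← MeasureTheory.integral_const_mul]
    congr 1
    ext x
    rw [← Real.exp_add]
    ring_nf
  have heq : ∀ β : ℝ,
      (∫ x, Real.exp ((2 * β) * x) ∂μ₀) / (∫ x, Real.exp (β * x) ∂μ₀) ^ 2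
      = (∫ x, Real.exp ((2 * β) * (x - w)) ∂μ₀)
        / (∫ x, Real.exp (β * (x - w)) ∂μ₀) ^ 2 := by
    intro β
    rw [hrw (2 * β), hrw β, mul_pow,
      show (2 * β) * w = β * w + β * w by ring, Real.exp_add, ← sq]
    exact mul_div_mul_left _ _ (by positivity)
  have h2β : Tendsto (fun β : ℝ => (2:ℝ) * β) atTop atTop :=
    tendsto_id.const_mul_atTop (by norm_num)
  have hnum : Tendsto (fun β : ℝ => ∫ x, Real.exp ((2 * β) * (x - w)) ∂μ₀) atTop (𝓝 p) :=
    key.comp h2β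
  have hden : Tendsto (fun β : ℝ => (∫ x, Real.exp (β * (x - w)) ∂μ₀) ^ 2) atTop (𝓝 (p ^ 2)) :=
    key.pow 2
  have hfin := hnum.div hden (by positivity)
  have : p / p ^ 2 = 1 / p := by
    rw [sq]
    field_simp
  rw [this] at hfin
  exact hfin.congr fun β => (heq β).symm
end

section
/- Let μ₀ be a probability measure on ℝ supported on (−∞, w] with w < ∞ and μ₀({w}) > 0. With μ_β the exponential tilt dμ_β = e^{βx}/M(β) dμ₀, one has lim_{β→∞} h(μ_β | μ₀) = log(1/μ₀({w})). -/
/-!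
Tilting by `β x` and by `β (x - w)` gives the same measure, so
`h(μ_β | μ₀) = G(β) / D(β) - log D(β)` with `D(β) = ∫ e^{β(x-w)} dμ₀` and
`G(β) = ∫ β(x-w) e^{β(x-w)} dμ₀`. Since `x ≤ w` a.e., for `β ≥ 0` both integrands are bounded
and converge pointwise to their value on the atom `{w}` (and to `0` below it), so by dominated
convergence `D(β) → μ₀{w}` and `G(β) → 0`.
-/

open MeasureTheory Filter Real Set
open scoped ENNReal NNReal Topology

lemma abs_mul_exp_le_one_of_nonpos {t : ℝ} (ht : t ≤ 0) : |t * exp t| ≤ 1 := by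
  have h : -t ≤ exp (-t) := by linarith [add_one_le_exp (-t)]
  calc |t * exp t| = -t * exp t := by rw [abs_mul, abs_of_nonpos ht, abs_of_pos (exp_pos t)]
    _ ≤ exp (-t) * exp t := by gcongr
    _ = 1 := by rw [← exp_add, neg_add_cancel, exp_zero]

lemma tendsto_mul_exp_atBot_nhds_zero : Tendsto (fun t : ℝ ↦ t * exp t) atBot (𝓝 0) := by
  have h := ((tendsto_pow_mul_exp_neg_atTop_nhds_zero 1).comp tendsto_neg_atBot_atTop).neg
  simpa using h

namespace MeasureTheory

variable {α : Type*} [MeasurableSpace α] {μ : Measure α} {f : α → ℝ}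

lemma Measure.tilted_add_const (μ : Measure α) (f : α → ℝ) (c : ℝ) :
    μ.tilted (fun x ↦ f x + c) = μ.tilted f := by
  simp only [Measure.tilted, exp_add, integral_mul_const]
  congr 1
  funext x
  rw [mul_div_mul_right _ _ (exp_pos c).ne']

lemma llr_tilted_self [SigmaFinite μ] (hf : Integrable (fun x ↦ exp (f x)) μ) :
    llr (μ.tilted f) μ =ᵐ[μ.tilted f] fun x ↦ f x - log (∫ x, exp (f x) ∂μ) :=
  (tilted_absolutelyContinuous μ f).ae_le (log_rnDeriv_tilted_left_self hf)

lemma integrable_llr_tilted_self [SigmaFinite μ] (hf : Integrable (fun x ↦ exp (f x)) μ)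
    (hfe : Integrable (fun x ↦ f x * exp (f x)) μ) :
    Integrable (llr (μ.tilted f) μ) (μ.tilted f) := by
  rw [integrable_congr (llr_tilted_self hf), integrable_tilted_iff hf]
  refine (hfe.sub (hf.mul_const (log (∫ x, exp (f x) ∂μ)))).congr (ae_of_all _ fun x ↦ ?_)
  simp only [Pi.sub_apply, smul_eq_mul]
  ring

lemma integral_llr_tilted_self [SigmaFinite μ] [NeZero μ]
    (hf : Integrable (fun x ↦ exp (f x)) μ) (hfe : Integrable (fun x ↦ f x * exp (f x)) μ) :
    ∫ x, llr (μ.tilted f) μ x ∂μ.tilted f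
      = (∫ x, f x * exp (f x) ∂μ) / (∫ x, exp (f x) ∂μ) - log (∫ x, exp (f x) ∂μ) := by
  set Z := ∫ x, exp (f x) ∂μ
  have hZ : Z ≠ 0 := (integral_exp_pos hf).ne'
  calc ∫ x, llr (μ.tilted f) μ x ∂μ.tilted f
      = ∫ x, (exp (f x) / Z) • (f x - log Z) ∂μ := by
        rw [integral_congr_ae (llr_tilted_self hf), integral_tilted]
    _ = (∫ x, f x * exp (f x) ∂μ) / Z - log Z / Z * Z := by
        have hpt : ∀ x, (exp (f x) / Z) • (f x - log Z)
            = f x * exp (f x) / Z - log Z / Z * exp (f x) := fun x ↦ by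
          rw [smul_eq_mul]; ring
        simp only [hpt]
        rw [integral_sub (hfe.div_const Z) (hf.const_mul _), integral_div, integral_const_mul]
    _ = (∫ x, f x * exp (f x) ∂μ) / Z - log Z := by rw [div_mul_cancel₀ _ hZ]

end MeasureTheory

lemma relEnt_tilted_self {α : Type*} [MeasurableSpace α] {μ : Measure α} {f : α → ℝ}
    [SigmaFinite μ] [NeZero μ]
    (hf : Integrable (fun x ↦ exp (f x)) μ) (hfe : Integrable (fun x ↦ f x * exp (f x)) μ) :
    relEnt (μ.tilted f) μ = ENNReal.ofReal
      ((∫ x, f x * exp (f x) ∂μ) / (∫ x, exp (f x) ∂μ) - log (∫ x, exp (f x) ∂μ)) := by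
  rw [relEnt, if_pos ⟨tilted_absolutelyContinuous μ f, integrable_llr_tilted_self hf hfe⟩,
    integral_llr_tilted_self hf hfe]

section

variable {μ : Measure ℝ} {w C : ℝ} {φ : ℝ → ℝ}

lemma ae_norm_comp_mul_sub_le (hbdd : ∀ t ≤ 0, |φ t| ≤ C) (hle : ∀ᵐ x ∂μ, x ≤ w) {β : ℝ}
    (hβ : 0 ≤ β) : ∀ᵐ x ∂μ, ‖φ (β * (x - w))‖ ≤ C := by
  filter_upwards [hle] with x hx
  exact hbdd _ (mul_nonpos_of_nonneg_of_nonpos hβ (sub_nonpos.mpr hx))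

lemma integrable_comp_mul_sub [IsFiniteMeasure μ] (hφ : Continuous φ)
    (hbdd : ∀ t ≤ 0, |φ t| ≤ C) (hle : ∀ᵐ x ∂μ, x ≤ w) {β : ℝ} (hβ : 0 ≤ β) :
    Integrable (fun x ↦ φ (β * (x - w))) μ :=
  Integrable.of_bound (by fun_prop) C (ae_norm_comp_mul_sub_le hbdd hle hβ)

lemma tendsto_integral_comp_mul_sub_atTop [IsFiniteMeasure μ] (hφ : Continuous φ)
    (hbdd : ∀ t ≤ 0, |φ t| ≤ C) (hlim : Tendsto φ atBot (𝓝 0)) (hle : ∀ᵐ x ∂μ, x ≤ w) :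
    Tendsto (fun β ↦ ∫ x, φ (β * (x - w)) ∂μ) atTop (𝓝 (φ 0 * μ.real {w})) := by
  have hval : φ 0 * μ.real {w} = ∫ x, ({w} : Set ℝ).indicator (fun _ ↦ φ 0) x ∂μ := by
    rw [integral_indicator_const _ (measurableSet_singleton w), smul_eq_mul, mul_comm]
  rw [hval]
  refine tendsto_integral_filter_of_dominated_convergence (fun _ ↦ C)
    (Eventually.of_forall fun β ↦ by fun_prop) ?_ (integrable_const C) ?_
  · filter_upwards [eventually_ge_atTop 0] with β hβ
    exact ae_norm_comp_mul_sub_le hbdd hle hβ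
  · filter_upwards [hle] with x hx
    rcases hx.lt_or_eq with hlt | rfl
    · rw [indicator_of_notMem (notMem_singleton_iff.mpr hlt.ne)]
      exact hlim.comp (tendsto_id.atTop_mul_const_of_neg (sub_neg.mpr hlt))
    · simp

end

theorem stmt4_general (μ₀ : Measure ℝ) [IsProbabilityMeasure μ₀]
    (w : ℝ) (hw : μ₀ {w} ≠ 0) (hsupp : μ₀ (Set.Ioi w) = 0) :
    Tendsto (fun β : ℝ => (relEnt (μ₀.tilted (fun x => β * x)) μ₀).toReal)
      atTop (𝓝 (Real.log (1 / (μ₀ {w}).toReal))) := by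
  set c := μ₀.real {w}
  have hc : 0 < c := ENNReal.toReal_pos hw (measure_ne_top μ₀ _)
  have hle : ∀ᵐ x ∂μ₀, x ≤ w := by
    filter_upwards [measure_eq_zero_iff_ae_notMem.mp hsupp] with x hx using not_lt.mp hx
  have hexp_bdd : ∀ t ≤ (0 : ℝ), |exp t| ≤ 1 := fun t ht ↦ by
    rwa [abs_of_pos (exp_pos t), exp_le_one_iff]
  set D := fun β : ℝ ↦ ∫ x, exp (β * (x - w)) ∂μ₀
  set G := fun β : ℝ ↦ ∫ x, β * (x - w) * exp (β * (x - w)) ∂μ₀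
  have hD : Tendsto D atTop (𝓝 c) := by
    simpa using tendsto_integral_comp_mul_sub_atTop continuous_exp hexp_bdd
      tendsto_exp_atBot hle
  have hG : Tendsto G atTop (𝓝 0) := by
    simpa using tendsto_integral_comp_mul_sub_atTop (by fun_prop)
      (fun t ht ↦ abs_mul_exp_le_one_of_nonpos ht) tendsto_mul_exp_atBot_nhds_zero hle
  have hrel : ∀ᶠ β in atTop,
      (relEnt (μ₀.tilted (fun x ↦ β * x)) μ₀).toReal = max (G β / D β - log (D β)) 0 := by
    filter_upwards [eventually_ge_atTop 0] with β hβ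
    have hshift : μ₀.tilted (fun x ↦ β * x) = μ₀.tilted (fun x ↦ β * (x - w)) := by
      rw [← Measure.tilted_add_const μ₀ (fun x ↦ β * (x - w)) (β * w)]
      simp only [mul_sub, sub_add_cancel]
    rw [hshift, relEnt_tilted_self
      (integrable_comp_mul_sub continuous_exp hexp_bdd hle hβ)
      (integrable_comp_mul_sub (φ := fun t ↦ t * exp t) (by fun_prop)
        (fun t ht ↦ abs_mul_exp_le_one_of_nonpos ht) hle hβ), ENNReal.toReal_ofReal']
  have hlim : max (0 / c - log c) 0 = log (1 / c) := by
    rw [zero_div, zero_sub, one_div, log_inv,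
      max_eq_left (neg_nonneg.mpr (log_nonpos hc.le measureReal_le_one))]
  show Tendsto _ atTop (𝓝 (log (1 / c)))
  rw [← hlim]
  exact (((hG.div hD hc.ne').sub (hD.log hc.ne')).max tendsto_const_nhds).congr'
    (hrel.mono fun _ h ↦ h.symm)

/-- Let `μ₀` be a probability measure on `ℝ` supported on `(−∞, w]` with
`w < ∞` and `μ₀({w}) > 0`, whose m.g.f. is finite everywhere. With `μ_β` the exponential
tilt `dμ_β = e^{βx}/M(β) dμ₀`, one has `lim_{β→∞} h(μ_β | μ₀) = log (1/μ₀({w}))`. -/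
theorem stmt4 (μ₀ : Measure ℝ) [IsProbabilityMeasure μ₀]
    (hM : ∀ lam : ℝ, Integrable (fun x => Real.exp (lam * x)) μ₀)
    (w : ℝ) (hw : μ₀ {w} ≠ 0) (hsupp : μ₀ (Set.Ioi w) = 0) :
    Tendsto (fun β : ℝ => (relEnt (μ₀.tilted (fun x => β * x)) μ₀).toReal)
      atTop (𝓝 (Real.log (1 / (μ₀ {w}).toReal))) :=
  stmt4_general μ₀ w hw hsupp
end

section
/- Let μ₀ be a probability measure on ℝ with M(λ) < ∞ for all λ and with w := sup(supp μ₀) = ∞. With μ_β the exponential tilt of μ₀, one has lim_{β→∞} h(μ_β | μ₀) = ∞. -/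
/-!
By the entropy inequality with `f x = max x 0`,
`h(μ_β | μ₀) ≥ ∫ max x 0 dμ_β - log ∫ exp (max x 0) dμ₀`, and the last integral is finite
because `M(1) < ∞`. The first term tends to `∞`: for `β ≥ 0` one has
`μ_β (-∞, c] · μ₀ (c + 1, ∞) ≤ exp (-β)`, so eventually `μ_β` puts mass at least `1/2`
above any level `c`.
-/

open MeasureTheory Filter Real Set
open scoped ENNReal NNReal Topology

section EntropyInequality

variable {α : Type*} [MeasurableSpace α] {μ ν : Measure α} [IsProbabilityMeasure μ]
  [IsProbabilityMeasure ν] {f : α → ℝ}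

/-- Donsker–Varadhan: this is Gibbs' inequality for `μ` against the tilt `ν.tilted f`. -/
lemma integral_sub_log_integral_exp_le_integral_llr (hμν : μ ≪ ν)
    (h_int : Integrable (llr μ ν) μ) (hfμ : Integrable f μ)
    (hfν : Integrable (fun x ↦ exp (f x)) ν) :
    ∫ x, f x ∂μ - log (∫ x, exp (f x) ∂ν) ≤ ∫ x, llr μ ν x ∂μ := by
  have := isProbabilityMeasure_tilted hfν
  have gibbs := InformationTheory.integral_llr_add_sub_measure_univ_nonneg
    (hμν.trans (absolutelyContinuous_tilted hfν)) (integrable_llr_tilted_right hμν hfμ h_int hfν)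
  rw [integral_llr_tilted_right hμν hfμ hfν h_int] at gibbs
  simp only [probReal_univ, add_sub_cancel_right] at gibbs
  linarith

lemma ofReal_integral_sub_log_integral_exp_le_relEnt (hfμ : Integrable f μ)
    (hfν : Integrable (fun x ↦ exp (f x)) ν) :
    ENNReal.ofReal (∫ x, f x ∂μ - log (∫ x, exp (f x) ∂ν)) ≤ relEnt μ ν := by
  unfold relEnt
  split_ifs with h
  · exact ENNReal.ofReal_le_ofReal
      (integral_sub_log_integral_exp_le_integral_llr h.1 h.2 hfμ hfν)
  · exact le_top

end EntropyInequality

lemma measureReal_tilted {α : Type*} [MeasurableSpace α] {μ : Measure α} {f : α → ℝ}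
    {s : Set α} (hs : MeasurableSet s) :
    (μ.tilted f).real s = (∫ x in s, exp (f x) ∂μ) / ∫ x, exp (f x) ∂μ := by
  rw [measureReal_def, tilted_apply_eq_ofReal_integral' _ hs, integral_div,
    ENNReal.toReal_ofReal (div_nonneg (setIntegral_nonneg hs fun _ _ ↦ (exp_pos _).le)
      (integral_nonneg fun _ ↦ (exp_pos _).le))]

section ExponentialTilt

variable {μ : Measure ℝ} {β : ℝ}

lemma integrable_exp_max_zero [IsFiniteMeasure μ] (h : Integrable (fun x ↦ exp x) μ) :
    Integrable (fun x ↦ exp (max x 0)) μ := by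
  refine (h.sup (integrable_const 1)).congr (ae_of_all _ fun x ↦ ?_)
  simp [exp_monotone.map_max]

lemma integrable_max_zero_tilted (hβ : Integrable (fun x ↦ exp (β * x)) μ)
    (hβ₁ : Integrable (fun x ↦ exp ((β + 1) * x)) μ) :
    Integrable (fun x ↦ max x 0) (μ.tilted (β * ·)) := by
  rw [integrable_tilted_iff hβ]
  refine hβ₁.mono' (by fun_prop) (ae_of_all _ fun x ↦ ?_)
  rw [norm_smul, norm_of_nonneg (exp_pos _).le, norm_of_nonneg (le_max_right _ _),
    add_mul, one_mul, exp_add]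
  gcongr
  exact max_le (by linarith [add_one_le_exp x]) (exp_pos x).le

lemma measureReal_tilted_Iic_mul_le [IsFiniteMeasure μ] (hβ₀ : 0 ≤ β)
    (hβ : Integrable (fun x ↦ exp (β * x)) μ) {c d : ℝ} :
    (μ.tilted (β * ·)).real (Iic c) * μ.real (Ioi d) ≤ exp (-(β * (d - c))) * μ.real (Iic c) := by
  have h_low : ∫ x in Iic c, exp (β * x) ∂μ ≤ exp (β * c) * μ.real (Iic c) := by
    rw [mul_comm, ← smul_eq_mul, ← setIntegral_const]
    exact setIntegral_mono_on hβ.integrableOn (integrableOn_const (measure_ne_top _ _))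
      measurableSet_Iic fun x hx ↦ exp_le_exp.2 (mul_le_mul_of_nonneg_left hx hβ₀)
  have h_high : exp (β * d) * μ.real (Ioi d) ≤ ∫ x, exp (β * x) ∂μ := by
    rw [mul_comm, ← smul_eq_mul, ← setIntegral_const]
    calc ∫ _ in Ioi d, exp (β * d) ∂μ ≤ ∫ x in Ioi d, exp (β * x) ∂μ :=
          setIntegral_mono_on (integrableOn_const (measure_ne_top _ _)) hβ.integrableOn
            measurableSet_Ioi fun x hx ↦ exp_le_exp.2 (mul_le_mul_of_nonneg_left hx.le hβ₀)
      _ ≤ ∫ x, exp (β * x) ∂μ :=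
          setIntegral_le_integral hβ (ae_of_all _ fun _ ↦ (exp_pos _).le)
  rw [measureReal_tilted measurableSet_Iic, div_mul_eq_mul_div]
  refine div_le_of_le_mul₀ (integral_nonneg fun _ ↦ (exp_pos _).le) (by positivity) ?_
  calc (∫ x in Iic c, exp (β * x) ∂μ) * μ.real (Ioi d)
      ≤ exp (β * c) * μ.real (Iic c) * μ.real (Ioi d) := by gcongr
    _ = exp (-(β * (d - c))) * μ.real (Iic c) * (exp (β * d) * μ.real (Ioi d)) := by
        rw [show β * c = -(β * (d - c)) + β * d by ring, exp_add]; ring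
    _ ≤ exp (-(β * (d - c))) * μ.real (Iic c) * ∫ x, exp (β * x) ∂μ := by gcongr

lemma tendsto_measureReal_tilted_Iic_atTop [IsProbabilityMeasure μ]
    (hM : ∀ β, Integrable (fun x ↦ exp (β * x)) μ) {c : ℝ} (hc : μ (Ioi (c + 1)) ≠ 0) :
    Tendsto (fun β : ℝ ↦ (μ.tilted (β * ·)).real (Iic c)) atTop (𝓝 0) := by
  have hp : 0 < μ.real (Ioi (c + 1)) := ENNReal.toReal_pos hc (measure_ne_top _ _)
  have h_lim : Tendsto (fun β : ℝ ↦ exp (-β) / μ.real (Ioi (c + 1))) atTop (𝓝 0) := by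
    simpa using tendsto_exp_neg_atTop_nhds_zero.div_const (μ.real (Ioi (c + 1)))
  refine tendsto_of_tendsto_of_tendsto_of_le_of_le' tendsto_const_nhds h_lim
    (Eventually.of_forall fun _ ↦ measureReal_nonneg) ?_
  filter_upwards [eventually_ge_atTop 0] with β hβ
  rw [le_div_iff₀ hp]
  calc (μ.tilted (β * ·)).real (Iic c) * μ.real (Ioi (c + 1))
      ≤ exp (-(β * (c + 1 - c))) * μ.real (Iic c) :=
        measureReal_tilted_Iic_mul_le hβ (hM β)
    _ ≤ exp (-β) := by
        rw [add_sub_cancel_left, mul_one]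
        exact mul_le_of_le_one_right (exp_pos _).le measureReal_le_one

lemma tendsto_integral_max_zero_tilted_atTop [IsProbabilityMeasure μ]
    (hM : ∀ β, Integrable (fun x ↦ exp (β * x)) μ) (hub : ∀ c, μ (Ioi c) ≠ 0) :
    Tendsto (fun β : ℝ ↦ ∫ x, max x 0 ∂(μ.tilted (β * ·))) atTop atTop := by
  refine tendsto_atTop.2 fun b ↦ ?_
  set c := 2 * |b|
  have h_tail := tendsto_measureReal_tilted_Iic_atTop hM (hub (c + 1))
  filter_upwards [h_tail.eventually (ge_mem_nhds (by norm_num : (0 : ℝ) < 1 / 2))] with β hβ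
  have := isProbabilityMeasure_tilted (hM β)
  have h_Ioi : 1 / 2 ≤ (μ.tilted (β * ·)).real (Ioi c) := by
    rw [← compl_Iic, probReal_compl_eq_one_sub measurableSet_Iic]
    linarith
  have h_markov := mul_meas_ge_le_integral_of_nonneg (ae_of_all _ fun x ↦ le_max_right x 0)
    (integrable_max_zero_tilted (hM β) (hM (β + 1))) c
  calc b ≤ c * (1 / 2) := by linarith [le_abs_self b]
    _ ≤ c * (μ.tilted (β * ·)).real (Ioi c) := by gcongr
    _ ≤ c * (μ.tilted (β * ·)).real {x | c ≤ max x 0} :=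
        mul_le_mul_of_nonneg_left
          (measureReal_mono fun x (hx : c < x) ↦ le_max_of_le_left hx.le) (by positivity)
    _ ≤ ∫ x, max x 0 ∂(μ.tilted (β * ·)) := h_markov

end ExponentialTilt

/-- Let `μ₀` be a probability measure on `ℝ` with `M(λ) < ∞` for all `λ`
and support unbounded from above (`μ₀((c,∞)) > 0` for every `c`). With `μ_β` the
exponential tilt of `μ₀`, one has `lim_{β→∞} h(μ_β | μ₀) = ∞`. -/
theorem stmt5 (μ₀ : Measure ℝ) [IsProbabilityMeasure μ₀]
    (hM : ∀ lam : ℝ, Integrable (fun x => Real.exp (lam * x)) μ₀)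
    (hub : ∀ c : ℝ, μ₀ (Set.Ioi c) ≠ 0) :
    Tendsto (fun β : ℝ => relEnt (μ₀.tilted (fun x => β * x)) μ₀) atTop (𝓝 ⊤) := by
  have h_exp : Integrable (fun x ↦ exp (max x 0)) μ₀ :=
    integrable_exp_max_zero (by simpa using hM 1)
  have h_lower := tendsto_atTop_add_const_right _ (-log (∫ x, exp (max x 0) ∂μ₀))
    (tendsto_integral_max_zero_tilted_atTop hM hub)
  refine tendsto_nhds_top_mono (ENNReal.tendsto_ofReal_atTop.comp h_lower)
    (Eventually.of_forall fun β ↦ ?_)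
  have := isProbabilityMeasure_tilted (hM β)
  exact ofReal_integral_sub_log_integral_exp_le_relEnt
    (integrable_max_zero_tilted (hM β) (hM (β + 1))) h_exp
end

section
/- Let K₂ be a sub-probability distribution on ℕ with total mass L₂(∞) = e^{−λ₀} < 1 (i.e., the associated renewal process is transient), and for each truncation level tr ∈ ℕ let K₂^{tr} be a probability distribution on {1,…,tr} agreeing with K₂ on {1,…,tr−1}. Let f₂^{tr}(λ) > 0 solve e^{−λ} = Σ_{n=1}^{tr} K₂^{tr}(n) e^{−n f₂^{tr}(λ)}. Then for every λ with 0 < λ < λ₀, sup_{tr∈ℕ} tr · f₂^{tr}(λ) < ∞; in fact tr·f₂^{tr}(λ) ≤ log[(1 − L₂(tr−1))/(e^{−λ} − L₂(tr−1))]. -/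
open Real

/-!
Write `tr = m + 1` and `S = L₂(m)`. The truncated law puts mass `K₂` on `1, …, m` and the
remaining mass `1 - S` on `tr`; bounding `e^{-n f} ≤ 1` for `n ≤ m` in the defining equation of
`f = f₂^{tr}(λ)` leaves `e^{-λ} ≤ S + (1 - S) e^{-tr f}`, which solves to the logarithmic bound.
Since `S ≤ e^{-λ₀} < e^{-λ} ≤ 1` and `(1 - S)/(e^{-λ} - S)` increases in `S`, the bound is uniform
in `tr`, with constant `log ((1 - e^{-λ₀})/(e^{-λ} - e^{-λ₀}))`.
-/

lemma sum_mul_exp_neg_le_sum {s : Finset ℕ} {q : ℕ → ℝ} {f : ℝ} (hq : ∀ n ∈ s, 0 ≤ q n)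
    (hf : 0 ≤ f) : ∑ n ∈ s, q n * exp (-(n : ℝ) * f) ≤ ∑ n ∈ s, q n := by
  refine Finset.sum_le_sum fun n hn => mul_le_of_le_one_right (hq n hn) ?_
  rw [exp_le_one_iff, neg_mul, neg_nonpos]
  positivity

lemma sum_Icc_mul_exp_neg_le_of_truncation {p q : ℕ → ℝ} {m : ℕ} {f : ℝ}
    (hq : ∀ n, 0 ≤ q n) (hagree : ∀ n, 1 ≤ n → n < m + 1 → p n = q n)
    (hprob : ∑ n ∈ Finset.Icc 1 (m + 1), p n = 1) (hf : 0 ≤ f) :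
    ∑ n ∈ Finset.Icc 1 (m + 1), p n * exp (-(n : ℝ) * f) ≤
      ∑ n ∈ Finset.Icc 1 m, q n +
        (1 - ∑ n ∈ Finset.Icc 1 m, q n) * exp (-(((m + 1 : ℕ) : ℝ) * f)) := by
  have hagree' : ∀ n ∈ Finset.Icc 1 m, p n = q n := fun n hn =>
    hagree n (Finset.mem_Icc.mp hn).1 (Nat.lt_succ_of_le (Finset.mem_Icc.mp hn).2)
  rw [Finset.sum_Icc_succ_top (Nat.le_add_left 1 m)] at hprob ⊢
  rw [Finset.sum_congr rfl hagree'] at hprob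
  rw [Finset.sum_congr rfl fun n hn => by rw [hagree' n hn], neg_mul]
  have hhead := sum_mul_exp_neg_le_sum (s := Finset.Icc 1 m) (fun n _ => hq n) hf
  have htop : p (m + 1) = 1 - ∑ n ∈ Finset.Icc 1 m, q n := by linarith
  rw [htop]
  linarith

lemma le_log_div_of_le_add_mul_exp_neg {S x t : ℝ} (hSx : S < x)
    (h : x ≤ S + (1 - S) * exp (-t)) : t ≤ log ((1 - S) / (x - S)) := by
  have hS1 : 0 < 1 - S := pos_of_mul_pos_left (by linarith) (exp_pos (-t)).le
  rw [le_log_iff_exp_le (div_pos hS1 (by linarith)), le_div_iff₀ (by linarith)]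
  calc exp t * (x - S) ≤ exp t * ((1 - S) * exp (-t)) := by gcongr; linarith
    _ = 1 - S := by rw [mul_left_comm, ← exp_add, add_neg_cancel, exp_zero, mul_one]

lemma succ_mul_le_log_div_of_truncation {p q : ℕ → ℝ} {m : ℕ} {f x : ℝ}
    (hq : ∀ n, 0 ≤ q n) (hagree : ∀ n, 1 ≤ n → n < m + 1 → p n = q n)
    (hprob : ∑ n ∈ Finset.Icc 1 (m + 1), p n = 1) (hf : 0 ≤ f)
    (hx : ∑ n ∈ Finset.Icc 1 m, q n < x)
    (heq : x = ∑ n ∈ Finset.Icc 1 (m + 1), p n * exp (-(n : ℝ) * f)) :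
    ((m + 1 : ℕ) : ℝ) * f ≤
      log ((1 - ∑ n ∈ Finset.Icc 1 m, q n) / (x - ∑ n ∈ Finset.Icc 1 m, q n)) :=
  le_log_div_of_le_add_mul_exp_neg hx
    (heq.trans_le (sum_Icc_mul_exp_neg_le_of_truncation hq hagree hprob hf))

lemma log_div_sub_le_log_div_sub {S b a : ℝ} (hSb : S ≤ b) (hba : b < a) (ha : a ≤ 1) :
    log ((1 - S) / (a - S)) ≤ log ((1 - b) / (a - b)) := by
  refine log_le_log (div_pos (by linarith) (by linarith)) ?_
  rw [div_le_div_iff₀ (by linarith) (by linarith)]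
  nlinarith

theorem stmt7_general (K₂ : ℕ → ℝ) (hpos : ∀ n, 0 ≤ K₂ n)
    (lam₀ : ℝ) (hmass : ∑' n, K₂ n = Real.exp (-lam₀))
    (K₂tr : ℕ → ℕ → ℝ)
    (htr_agree : ∀ tr n, 1 ≤ n → n < tr → K₂tr tr n = K₂ n)
    (htr_prob : ∀ tr, 1 ≤ tr → ∑ n ∈ Finset.Icc 1 tr, K₂tr tr n = 1)
    (lam : ℝ) (hlam : 0 < lam) (hlamlt : lam < lam₀)
    (f₂ : ℕ → ℝ) (hf₂pos : ∀ tr, 0 < f₂ tr)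
    (hf₂ : ∀ tr, 1 ≤ tr →
      Real.exp (-lam) = ∑ n ∈ Finset.Icc 1 tr, K₂tr tr n * Real.exp (-(n : ℝ) * f₂ tr)) :
    (∀ tr : ℕ, 1 ≤ tr → (tr : ℝ) * f₂ tr ≤
      Real.log ((1 - ∑ k ∈ Finset.Icc 1 (tr - 1), K₂ k) /
        (Real.exp (-lam) - ∑ k ∈ Finset.Icc 1 (tr - 1), K₂ k)))
    ∧ ∃ C : ℝ, ∀ tr : ℕ, (tr : ℝ) * f₂ tr ≤ C := by
  have hsumm : Summable K₂ := by
    by_contra h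
    exact (exp_pos (-lam₀)).ne' (hmass ▸ tsum_eq_zero_of_not_summable h)
  have hL : ∀ m, ∑ k ∈ Finset.Icc 1 m, K₂ k ≤ exp (-lam₀) :=
    fun m => hmass ▸ hsumm.sum_le_tsum _ fun n _ => hpos n
  have hexp : exp (-lam₀) < exp (-lam) := exp_lt_exp.mpr (by linarith)
  have hbound : ∀ tr : ℕ, 1 ≤ tr → (tr : ℝ) * f₂ tr ≤
      log ((1 - ∑ k ∈ Finset.Icc 1 (tr - 1), K₂ k) /
        (exp (-lam) - ∑ k ∈ Finset.Icc 1 (tr - 1), K₂ k)) := by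
    intro tr htr
    obtain ⟨m, rfl⟩ : ∃ m, tr = m + 1 := ⟨tr - 1, (Nat.sub_add_cancel htr).symm⟩
    rw [Nat.add_sub_cancel]
    exact succ_mul_le_log_div_of_truncation hpos (htr_agree _) (htr_prob _ htr) (hf₂pos _).le
      ((hL m).trans_lt hexp) (hf₂ _ htr)
  have hexp_le_one : exp (-lam) ≤ 1 := exp_le_one_iff.mpr (by linarith)
  obtain ⟨C, hC⟩ : ∃ C : ℝ, ∀ tr : ℕ, 1 ≤ tr → (tr : ℝ) * f₂ tr ≤ C := ⟨_, fun tr htr =>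
    (hbound tr htr).trans (log_div_sub_le_log_div_sub (hL _) hexp hexp_le_one)⟩
  refine ⟨hbound, C, fun tr => ?_⟩
  rcases tr.eq_zero_or_pos with rfl | htr
  · -- `C ≥ f₂ 1 > 0`
    simpa using (hf₂pos 1).le.trans (by simpa using hC 1 le_rfl)
  · exact hC tr htr

/-- Let `K₂` be a sub-probability distribution on `ℕ` with total mass
`e^{−λ₀} < 1`, and for each truncation level `tr` let `K₂^{tr}` be the probability
distribution on `{1,…,tr}` agreeing with `K₂` on `{1,…,tr−1}`. Let `f₂^{tr}(λ) > 0` solve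
`e^{−λ} = Σ_{n=1}^{tr} K₂^{tr}(n) e^{−n f₂^{tr}(λ)}`. Then for `0 < λ < λ₀`,
`tr·f₂^{tr}(λ) ≤ log[(1 − L₂(tr−1))/(e^{−λ} − L₂(tr−1))]` and
`sup_{tr} tr·f₂^{tr}(λ) < ∞`. -/
theorem stmt7 (K₂ : ℕ → ℝ) (h0 : K₂ 0 = 0) (hpos : ∀ n, 0 ≤ K₂ n)
    (lam₀ : ℝ) (hlam₀ : 0 < lam₀) (hmass : ∑' n, K₂ n = Real.exp (-lam₀))
    (K₂tr : ℕ → ℕ → ℝ)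
    (htr_agree : ∀ tr n, 1 ≤ n → n < tr → K₂tr tr n = K₂ n)
    (htr_nonneg : ∀ tr n, 0 ≤ K₂tr tr n)
    (htr_supp : ∀ tr n, n = 0 ∨ tr < n → K₂tr tr n = 0)
    (htr_prob : ∀ tr, 1 ≤ tr → ∑ n ∈ Finset.Icc 1 tr, K₂tr tr n = 1)
    (lam : ℝ) (hlam : 0 < lam) (hlamlt : lam < lam₀)
    (f₂ : ℕ → ℝ) (hf₂pos : ∀ tr, 0 < f₂ tr)
    (hf₂ : ∀ tr, 1 ≤ tr →
      Real.exp (-lam) = ∑ n ∈ Finset.Icc 1 tr, K₂tr tr n * Real.exp (-(n : ℝ) * f₂ tr)) :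
    (∀ tr : ℕ, 1 ≤ tr → (tr : ℝ) * f₂ tr ≤
      Real.log ((1 - ∑ k ∈ Finset.Icc 1 (tr - 1), K₂ k) /
        (Real.exp (-lam) - ∑ k ∈ Finset.Icc 1 (tr - 1), K₂ k)))
    ∧ ∃ C : ℝ, ∀ tr : ℕ, (tr : ℝ) * f₂ tr ≤ C :=
  stmt7_general K₂ hpos lam₀ hmass K₂tr htr_agree htr_prob lam hlam hlamlt f₂ hf₂pos hf₂
end

section
/- Let μ₀ be a probability measure on ℝ with ∫ e^{λx} dμ₀(x) < ∞ for all λ > 0. Fix γ > 0 and let K_γ := {μ ∈ P(ℝ) : h(μ | μ₀) ≤ γ}. Then the map μ ↦ ∫ max(x,0) dμ(x) is upper semicontinuous on K_γ with respect to weak convergence. -/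
open MeasureTheory Filter Real Set
open scoped ENNReal NNReal Topology

/-!
On `K_γ` the Radon–Nikodym density `g = dμ/dμ₀` has `∫ klFun g dμ₀ ≤ γ`, and since `e^s - 1` is the
convex conjugate of `klFun t = t log t + 1 - t`, pointwise Fenchel–Young gives
`λ ∫ (x - n)⁺ dμ ≤ γ + ∫ e^{λ (x - n)⁺} dμ₀ - 1` for every `μ ∈ K_γ`. Taking `λ` large and then
`n` large (dominated convergence under `μ₀`) makes the tail `∫ (x - n)⁺ dμ` uniformly small on
`K_γ`. So the weakly continuous functionals `μ ↦ ∫ min (x⁺, n) dμ` converge uniformly on `K_γ` to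
`μ ↦ ∫ x⁺ dμ`, which is therefore even continuous on `K_γ`.
-/

open InformationTheory
open scoped BoundedContinuousFunction

lemma mul_le_exp_sub_one_add_klFun (s : ℝ) {t : ℝ} (ht : 0 ≤ t) :
    s * t ≤ exp s - 1 + klFun t := by
  rw [klFun_apply]
  rcases ht.eq_or_lt with rfl | ht
  · simp [(exp_pos s).le]
  · -- the tangent line of `exp` at `log t`
    have := mul_le_mul_of_nonneg_left (add_one_le_exp (s - log t)) ht.le
    rw [exp_sub, exp_log ht, mul_div_cancel₀ _ ht.ne'] at this
    nlinarith

section EntropyInequality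

variable {α : Type*} [MeasurableSpace α] {μ ν : Measure α} [IsFiniteMeasure μ]
  [IsFiniteMeasure ν] {f : α → ℝ}

lemma integrable_of_integrable_exp (hμν : μ ≪ ν) (h_int : Integrable (llr μ ν) μ)
    (hf : Measurable f) (hf_nonneg : ∀ x, 0 ≤ f x) (hexp : Integrable (fun x ↦ exp (f x)) ν) :
    Integrable f μ := by
  refine (integrable_rnDeriv_smul_iff hμν).1 <|
    ((hexp.sub (integrable_const 1)).add ((integrable_klFun_rnDeriv_iff hμν).2 h_int)).mono'
      ((Measure.measurable_rnDeriv μ ν).ennreal_toReal.smul hf).aestronglyMeasurable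
      (ae_of_all _ fun x ↦ ?_)
  rw [smul_eq_mul, Real.norm_eq_abs, abs_of_nonneg (mul_nonneg ENNReal.toReal_nonneg (hf_nonneg x)),
    mul_comm]
  exact mul_le_exp_sub_one_add_klFun _ ENNReal.toReal_nonneg

lemma integral_le_integral_exp_add_integral_llr (hμν : μ ≪ ν) (h_int : Integrable (llr μ ν) μ)
    (hf : Integrable f μ) (hexp : Integrable (fun x ↦ exp (f x)) ν) :
    ∫ x, f x ∂μ ≤ ∫ x, exp (f x) ∂ν + ∫ x, llr μ ν x ∂μ - μ.real univ := by
  have h_klFun := (integrable_klFun_rnDeriv_iff hμν).2 h_int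
  have h_exp_sub : Integrable (fun x ↦ exp (f x) - 1) ν := hexp.sub (integrable_const 1)
  calc ∫ x, f x ∂μ = ∫ x, (μ.rnDeriv ν x).toReal • f x ∂ν := (integral_rnDeriv_smul hμν).symm
    _ ≤ ∫ x, (exp (f x) - 1 + klFun (μ.rnDeriv ν x).toReal) ∂ν := by
      refine integral_mono ((integrable_rnDeriv_smul_iff hμν).2 hf)
        (h_exp_sub.add h_klFun) fun x ↦ ?_
      rw [smul_eq_mul, mul_comm]
      exact mul_le_exp_sub_one_add_klFun _ ENNReal.toReal_nonneg
    _ = ∫ x, exp (f x) ∂ν + ∫ x, llr μ ν x ∂μ - μ.real univ := by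
      rw [integral_add h_exp_sub h_klFun,
        integral_sub hexp (integrable_const 1), integral_klFun_rnDeriv hμν h_int,
        integral_const, smul_eq_mul, mul_one]
      ring

end EntropyInequality

lemma integral_llr_le_of_relEnt_le {α : Type*} [MeasurableSpace α] {μ ν : Measure α} {γ : ℝ}
    (h : relEnt μ ν ≤ ENNReal.ofReal γ) :
    μ ≪ ν ∧ Integrable (llr μ ν) μ ∧ ∫ x, llr μ ν x ∂μ ≤ max γ 0 := by
  unfold relEnt at h
  split_ifs at h with hac
  · refine ⟨hac.1, hac.2, ?_⟩
    rcases ENNReal.ofReal_le_ofReal_iff'.1 h with h | h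
    · exact h.trans (le_max_left _ _)
    · exact h.trans (le_max_right _ _)
  · exact absurd (top_le_iff.1 h) ENNReal.ofReal_ne_top

lemma max_zero_eq_min_add_max_sub_zero (x : ℝ) {a : ℝ} (ha : 0 ≤ a) :
    max x 0 = min (max x 0) a + max (x - a) 0 := by
  rcases le_total x a with h | h
  · rw [min_eq_left (max_le h ha), max_eq_right (sub_nonpos.2 h), add_zero]
  · rw [min_eq_right (h.trans (le_max_left _ _)), max_eq_left (ha.trans h),
      max_eq_left (sub_nonneg.2 h)]
    ring

lemma integrable_exp_mul_max_sub_zero {μ₀ : Measure ℝ} [IsFiniteMeasure μ₀] {lam : ℝ}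
    (hM : Integrable (fun x ↦ exp (lam * x)) μ₀) (a : ℝ) :
    Integrable (fun x ↦ exp (lam * max (x - a) 0)) μ₀ := by
  refine ((hM.const_mul (exp (-(lam * a)))).add (integrable_const 1)).mono'
    (by fun_prop) (ae_of_all _ fun x ↦ ?_)
  rw [Real.norm_eq_abs, abs_of_pos (exp_pos _), Pi.add_apply, ← exp_add, neg_add_eq_sub,
    ← mul_sub]
  rcases le_total (x - a) 0 with h | h
  · rw [max_eq_right h, mul_zero, exp_zero]
    linarith [exp_pos (lam * (x - a))]
  · rw [max_eq_left h]
    linarith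

lemma tendsto_integral_exp_mul_max_sub_zero {μ₀ : Measure ℝ} [IsFiniteMeasure μ₀] {lam : ℝ}
    (hlam : 0 ≤ lam) (hM : Integrable (fun x ↦ exp (lam * x)) μ₀) :
    Tendsto (fun n : ℕ ↦ ∫ x, exp (lam * max (x - n) 0) ∂μ₀) atTop (𝓝 (μ₀.real univ)) := by
  have := tendsto_integral_of_dominated_convergence (μ := μ₀)
    (F := fun (n : ℕ) x ↦ exp (lam * max (x - n) 0)) (f := fun _ ↦ 1)
    _ (fun n ↦ (integrable_exp_mul_max_sub_zero hM n).aestronglyMeasurable)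
    (by simpa using integrable_exp_mul_max_sub_zero hM 0)
    (fun n ↦ ae_of_all _ fun x ↦ ?_) (ae_of_all _ fun x ↦ ?_)
  · simpa using this
  · rw [Real.norm_eq_abs, abs_of_pos (exp_pos _)]
    gcongr
    exact sub_le_self _ n.cast_nonneg
  · refine tendsto_const_nhds.congr' ?_
    filter_upwards [eventually_ge_atTop ⌈x⌉₊] with n hn
    rw [max_eq_right (sub_nonpos.2 ((Nat.le_ceil x).trans (Nat.cast_le.2 hn))), mul_zero, exp_zero]

lemma integral_max_sub_zero_le_of_relEnt_le {μ₀ μ : Measure ℝ} [IsProbabilityMeasure μ₀]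
    [IsProbabilityMeasure μ] {γ lam : ℝ} (hμ : relEnt μ μ₀ ≤ ENNReal.ofReal γ) (hlam : 0 < lam)
    (hM : Integrable (fun x ↦ exp (lam * x)) μ₀) (a : ℝ) :
    Integrable (fun x ↦ max (x - a) 0) μ ∧
      lam * ∫ x, max (x - a) 0 ∂μ ≤ max γ 0 + ∫ x, exp (lam * max (x - a) 0) ∂μ₀ - 1 := by
  obtain ⟨hac, h_int, h_le⟩ := integral_llr_le_of_relEnt_le hμ
  have hexp := integrable_exp_mul_max_sub_zero hM a
  have h_scaled : Integrable (fun x ↦ lam * max (x - a) 0) μ :=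
    integrable_of_integrable_exp hac h_int (by fun_prop)
      (fun x ↦ mul_nonneg hlam.le (le_max_right _ _)) hexp
  have h_tail : Integrable (fun x ↦ max (x - a) 0) μ := by
    simpa [hlam.ne'] using h_scaled.const_mul lam⁻¹
  refine ⟨h_tail, ?_⟩
  have := integral_le_integral_exp_add_integral_llr hac h_int h_scaled hexp
  rw [integral_const_mul, probReal_univ] at this
  linarith

noncomputable def truncatedPosPart (n : ℕ) : ℝ →ᵇ ℝ :=
  BoundedContinuousFunction.ofNormedAddCommGroup (fun x : ℝ ↦ min (max x 0) (n : ℝ))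
    (by fun_prop) n fun x ↦ by
      rw [Real.norm_eq_abs, abs_of_nonneg (le_min (le_max_right _ _) n.cast_nonneg)]
      exact min_le_right _ _

lemma tendstoUniformlyOn_integral_truncatedPosPart (μ₀ : Measure ℝ) [IsProbabilityMeasure μ₀]
    (hM : ∀ lam : ℝ, 0 < lam → Integrable (fun x ↦ exp (lam * x)) μ₀) (γ : ℝ) :
    TendstoUniformlyOn (fun n (μ : ProbabilityMeasure ℝ) ↦ ∫ x, truncatedPosPart n x ∂μ)
      (fun μ ↦ ∫ x, max x 0 ∂μ) atTop
      {μ : ProbabilityMeasure ℝ | relEnt (μ : Measure ℝ) μ₀ ≤ ENNReal.ofReal γ} := by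
  rw [Metric.tendstoUniformlyOn_iff]
  intro ε hε
  set lam := (max γ 0 + 1) / ε
  have hlam : 0 < lam := by positivity
  have h_exp_lt : ∀ᶠ n : ℕ in atTop, ∫ x, exp (lam * max (x - n) 0) ∂μ₀ < 2 := by
    refine (tendsto_integral_exp_mul_max_sub_zero hlam.le (hM lam hlam)).eventually
      (gt_mem_nhds ?_)
    simp
  filter_upwards [h_exp_lt] with n hn μ hμ
  obtain ⟨h_tail, h_bound⟩ := integral_max_sub_zero_le_of_relEnt_le hμ hlam (hM lam hlam) n
  have h_split : ∫ x, max x 0 ∂(μ : Measure ℝ)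
      = ∫ x, truncatedPosPart n x ∂μ + ∫ x, max (x - n) 0 ∂(μ : Measure ℝ) := by
    rw [← integral_add ((truncatedPosPart n).integrable _) h_tail]
    exact integral_congr_ae (ae_of_all _ fun x ↦ max_zero_eq_min_add_max_sub_zero x n.cast_nonneg)
  rw [h_split, dist_eq_norm, add_sub_cancel_left, Real.norm_eq_abs,
    abs_of_nonneg (integral_nonneg fun x ↦ le_max_right _ _)]
  have : lam * ε = max γ 0 + 1 := div_mul_cancel₀ _ hε.ne'
  nlinarith

theorem stmt14_general (μ₀ : Measure ℝ) [IsProbabilityMeasure μ₀]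
    (hM : ∀ lam : ℝ, 0 < lam → Integrable (fun x => Real.exp (lam * x)) μ₀)
    (γ : ℝ) :
    UpperSemicontinuousOn
      (fun μ : ProbabilityMeasure ℝ => ∫ x, max x 0 ∂(μ : Measure ℝ))
      {μ : ProbabilityMeasure ℝ | relEnt (μ : Measure ℝ) μ₀ ≤ ENNReal.ofReal γ} :=
  have h_trunc_cont (n : ℕ) : ContinuousOn
      (fun μ : ProbabilityMeasure ℝ ↦ ∫ x, truncatedPosPart n x ∂(μ : Measure ℝ)) _ :=
    (ProbabilityMeasure.continuous_integral_boundedContinuousFunction _).continuousOn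
  ((tendstoUniformlyOn_integral_truncatedPosPart μ₀ hM γ).continuousOn
    (.of_forall h_trunc_cont)).upperSemicontinuousOn

/-- Let `μ₀` be a probability measure on `ℝ` with `∫ e^{λx} dμ₀ < ∞` for all
`λ > 0`, and fix `γ > 0`. Then on `K_γ = {μ : h(μ | μ₀) ≤ γ}` the map
`μ ↦ ∫ max(x,0) dμ` is upper semicontinuous with respect to weak convergence of
probability measures. -/
theorem stmt14 (μ₀ : Measure ℝ) [IsProbabilityMeasure μ₀]
    (hM : ∀ lam : ℝ, 0 < lam → Integrable (fun x => Real.exp (lam * x)) μ₀)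
    (γ : ℝ) (hγ : 0 < γ) :
    UpperSemicontinuousOn
      (fun μ : ProbabilityMeasure ℝ => ∫ x, max x 0 ∂(μ : Measure ℝ))
      {μ : ProbabilityMeasure ℝ | relEnt (μ : Measure ℝ) μ₀ ≤ ENNReal.ofReal γ} :=
  stmt14_general μ₀ hM γ
end

section
/- Let μ₀ be a probability measure on ℝ with M(λ) < ∞ for all λ and unbounded support from above. For a ∈ (0,∞), the constrained entropy minimization inf{h(μ | μ₀) : μ ∈ P(ℝ), ∫|x|dμ < ∞, ∫x dμ = a} is attained uniquely by the exponential tilt μ_λ with dμ_λ = e^{λx}/M(λ) dμ₀ and λ = λ(a) chosen so that ∫x dμ_λ = a; moreover for any competitor μ with mean a, h(μ | μ₀) = h(μ | μ_λ) + h(μ_λ | μ₀). -/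
open MeasureTheory Filter Real Set
open scoped ENNReal NNReal Topology

namespace InformationTheory

variable {α : Type*} {mα : MeasurableSpace α} {μ ν : Measure α} {f : α → ℝ}

lemma klDiv_eq_ofReal_integral_llr [IsProbabilityMeasure μ] [IsProbabilityMeasure ν]
    (hμν : μ ≪ ν) (h_int : Integrable (llr μ ν) μ) :
    klDiv μ ν = ENNReal.ofReal (∫ x, llr μ ν x ∂μ) := by
  simp [klDiv_of_ac_of_integrable hμν h_int]

lemma integral_llr_nonneg [IsProbabilityMeasure μ] [IsProbabilityMeasure ν]
    (hμν : μ ≪ ν) (h_int : Integrable (llr μ ν) μ) : 0 ≤ ∫ x, llr μ ν x ∂μ := by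
  simpa using integral_llr_add_sub_measure_univ_nonneg hμν h_int

lemma llr_tilted_left_self [SigmaFinite ν] (hf : Integrable (fun x => exp (f x)) ν) :
    llr (ν.tilted f) ν =ᵐ[ν.tilted f] fun x => f x - log (∫ x, exp (f x) ∂ν) :=
  (tilted_absolutelyContinuous ν f).ae_le (log_rnDeriv_tilted_left_self hf)

lemma integrable_llr_tilted_left_self [SigmaFinite ν] (hf : Integrable (fun x => exp (f x)) ν)
    (hfν : Integrable f (ν.tilted f)) : Integrable (llr (ν.tilted f) ν) (ν.tilted f) := by
  rw [integrable_congr (llr_tilted_left_self hf)]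
  exact hfν.sub (integrable_const _)

lemma integral_llr_tilted_left_self [IsProbabilityMeasure ν]
    (hf : Integrable (fun x => exp (f x)) ν) (hfν : Integrable f (ν.tilted f)) :
    ∫ x, llr (ν.tilted f) ν x ∂(ν.tilted f)
      = ∫ x, f x ∂(ν.tilted f) - log (∫ x, exp (f x) ∂ν) := by
  have := isProbabilityMeasure_tilted hf
  rw [integral_congr_ae (llr_tilted_left_self hf), integral_sub hfν (integrable_const _)]
  simp

lemma klDiv_tilted_left_self [IsProbabilityMeasure ν]
    (hf : Integrable (fun x => exp (f x)) ν) (hfν : Integrable f (ν.tilted f)) :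
    klDiv (ν.tilted f) ν = ENNReal.ofReal (∫ x, f x ∂(ν.tilted f) - log (∫ x, exp (f x) ∂ν)) := by
  have := isProbabilityMeasure_tilted hf
  rw [klDiv_eq_ofReal_integral_llr (tilted_absolutelyContinuous ν f)
    (integrable_llr_tilted_left_self hf hfν), integral_llr_tilted_left_self hf hfν]

lemma klDiv_tilted_right_eq_top_iff [IsFiniteMeasure μ] [SigmaFinite ν]
    (hf : Integrable (fun x => exp (f x)) ν) (hfμ : Integrable f μ) :
    klDiv μ (ν.tilted f) = ∞ ↔ klDiv μ ν = ∞ := by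
  rw [← not_iff_not, ← ne_eq, ← ne_eq, klDiv_ne_top_iff, klDiv_ne_top_iff]
  have hg : Integrable (fun x => -f x + log (∫ z, exp (f z) ∂ν)) μ :=
    hfμ.neg.add (integrable_const _)
  refine ⟨fun ⟨hμνf, h_int⟩ => ?_, fun ⟨hμν, h_int⟩ => ?_⟩
  · have hμν := hμνf.trans (tilted_absolutelyContinuous ν f)
    rw [integrable_congr (llr_tilted_right hμν hf),
      integrable_add_iff_integrable_right' hg] at h_int
    exact ⟨hμν, h_int⟩
  · exact ⟨hμν.trans (absolutelyContinuous_tilted hf), integrable_llr_tilted_right hμν hfμ h_int hf⟩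

theorem klDiv_eq_klDiv_tilted_right_add [IsProbabilityMeasure μ] [IsProbabilityMeasure ν]
    (hf : Integrable (fun x => exp (f x)) ν) (hfμ : Integrable f μ)
    (hfν : Integrable f (ν.tilted f)) (h_eq : ∫ x, f x ∂μ = ∫ x, f x ∂(ν.tilted f)) :
    klDiv μ ν = klDiv μ (ν.tilted f) + klDiv (ν.tilted f) ν := by
  have := isProbabilityMeasure_tilted hf
  by_cases h : μ ≪ ν ∧ Integrable (llr μ ν) μ
  · obtain ⟨hμν, h_int⟩ := h
    have hμνf : μ ≪ ν.tilted f := hμν.trans (absolutelyContinuous_tilted hf)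
    have h_intf := integrable_llr_tilted_right hμν hfμ h_int hf
    have h_nonneg := integral_llr_nonneg (tilted_absolutelyContinuous ν f)
      (integrable_llr_tilted_left_self hf hfν)
    rw [integral_llr_tilted_left_self hf hfν] at h_nonneg
    rw [klDiv_eq_ofReal_integral_llr hμν h_int, klDiv_eq_ofReal_integral_llr hμνf h_intf,
      klDiv_tilted_left_self hf hfν,
      ← ENNReal.ofReal_add (integral_llr_nonneg hμνf h_intf) h_nonneg,
      integral_llr_tilted_right hμν hfμ hf h_int, h_eq]
    ring_nf
  · have h_top : klDiv μ ν = ∞ := klDiv_eq_top_iff.2 fun hμν h_int => h ⟨hμν, h_int⟩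
    rw [h_top, (klDiv_tilted_right_eq_top_iff hf hfμ).2 h_top, top_add]

end InformationTheory

namespace ProbabilityTheory

variable {μ : Measure ℝ}

lemma mem_interior_integrableExpSet_id (hM : ∀ t, Integrable (fun x => exp (t * x)) μ) (t : ℝ) :
    t ∈ interior (integrableExpSet id μ) := by
  simp [show integrableExpSet id μ = univ from eq_univ_of_forall hM]

lemma exists_le_deriv_cgf_id [IsProbabilityMeasure μ]
    (hM : ∀ t, Integrable (fun x => exp (t * x)) μ)
    (hub : ∀ c, μ (Ioi c) ≠ 0) (a : ℝ) : ∃ s, 0 ≤ s ∧ a ≤ deriv (cgf id μ) s := by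
  set p := μ.real {x | a + 1 ≤ x}
  have hp : 0 < p := by
    refine ENNReal.toReal_pos ?_ (measure_ne_top _ _)
    exact ne_bot_of_le_ne_bot (hub (a + 1)) (measure_mono Ioi_subset_Ici_self)
  -- chosen so that the Chernoff lower bound `t (a + 1) + log p` on `cgf t` equals `a t + 1`
  set t := 1 - log p
  have ht : 0 < t := by
    linarith [log_nonpos hp.le measureReal_le_one]
  have hcgf : a * t < cgf id μ t := by
    have h := log_le_log hp (measure_ge_le_exp_cgf (X := id) (a + 1) ht.le (hM t))
    rw [log_exp] at h
    linarith
  have hdiff : Differentiable ℝ (cgf id μ) := fun s =>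
    (analyticAt_cgf (mem_interior_integrableExpSet_id hM s)).differentiableAt
  obtain ⟨s, hs, hslope⟩ := exists_deriv_eq_slope (cgf id μ) ht hdiff.continuous.continuousOn
    hdiff.differentiableOn
  refine ⟨s, hs.1.le, ?_⟩
  rw [hslope, cgf_zero, sub_zero, sub_zero, le_div_iff₀ ht]
  exact hcgf.le

lemma integrable_id_tilted_mul (hM : ∀ t, Integrable (fun x => exp (t * x)) μ) (t : ℝ) :
    Integrable (fun x => x) (μ.tilted (fun x => t * x)) :=
  memLp_one_iff_integrable.1 <|
    memLp_tilted_mul (X := id) (mem_interior_integrableExpSet_id hM t) 1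

lemma exists_integral_tilted_mul_eq [IsProbabilityMeasure μ]
    (hM : ∀ t, Integrable (fun x => exp (t * x)) μ) (hub : ∀ c, μ (Ioi c) ≠ 0)
    {a : ℝ} (ha : ∫ x, x ∂μ ≤ a) : ∃ t, ∫ x, x ∂(μ.tilted (fun x => t * x)) = a := by
  have hint := mem_interior_integrableExpSet_id hM
  have hcont : Continuous (deriv (cgf id μ)) := by
    rw [continuous_iff_continuousAt]
    exact fun t => ((analyticOnNhd_cgf.deriv) t (hint t)).continuousAt
  obtain ⟨s, hs, has⟩ := exists_le_deriv_cgf_id hM hub a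
  have h0 : deriv (cgf id μ) 0 = ∫ x, x ∂μ := by simp [deriv_cgf_zero (hint 0)]
  obtain ⟨t, -, ht⟩ := intermediate_value_Icc hs hcont.continuousOn ⟨h0 ▸ ha, has⟩
  exact ⟨t, (integral_tilted_mul_self (hint t)).trans ht⟩

end ProbabilityTheory

open InformationTheory ProbabilityTheory

lemma relEnt_eq_klDiv {α : Type*} [MeasurableSpace α] (μ ν : Measure α) [IsProbabilityMeasure μ]
    [IsProbabilityMeasure ν] : relEnt μ ν = klDiv μ ν := by
  unfold relEnt
  split_ifs with h
  · exact (klDiv_eq_ofReal_integral_llr h.1 h.2).symm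
  · exact (klDiv_eq_top_iff.2 fun hμν h_int => h ⟨hμν, h_int⟩).symm

/-- Let `μ₀` be a probability measure on `ℝ` with mean `0`, finite m.g.f.
everywhere and support unbounded from above. For `a ∈ (0,∞)` there is `λ = λ(a)` such
that the exponential tilt `μ_λ` has mean `a`, the Pythagorean identity
`h(μ | μ₀) = h(μ | μ_λ) + h(μ_λ | μ₀)` holds for every probability measure `μ` with
`∫|x| dμ < ∞` and mean `a`, and `μ_λ` is the unique minimizer of `h(· | μ₀)` among such
measures. -/
theorem stmt17 (μ₀ : Measure ℝ) [IsProbabilityMeasure μ₀]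
    (hM : ∀ lam : ℝ, Integrable (fun x => Real.exp (lam * x)) μ₀)
    (hub : ∀ c : ℝ, μ₀ (Set.Ioi c) ≠ 0)
    (hmean : ∫ x, x ∂μ₀ = 0)
    (a : ℝ) (ha : 0 < a) :
    ∃ lam : ℝ, (∫ x, x ∂(μ₀.tilted (fun x => lam * x)) = a) ∧
      ∀ μ : Measure ℝ, IsProbabilityMeasure μ → Integrable (fun x => |x|) μ →
        (∫ x, x ∂μ = a) →
          relEnt μ μ₀
              = relEnt μ (μ₀.tilted (fun x => lam * x))
                + relEnt (μ₀.tilted (fun x => lam * x)) μ₀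
          ∧ relEnt (μ₀.tilted (fun x => lam * x)) μ₀ ≤ relEnt μ μ₀
          ∧ (relEnt μ μ₀ = relEnt (μ₀.tilted (fun x => lam * x)) μ₀ →
              μ = μ₀.tilted (fun x => lam * x)) := by
  obtain ⟨lam, hlam⟩ := exists_integral_tilted_mul_eq hM hub (hmean.trans_le ha.le)
  set ν := μ₀.tilted (fun x => lam * x)
  have := isProbabilityMeasure_tilted (hM lam)
  have hν : Integrable (fun x => lam * x) ν := (integrable_id_tilted_mul hM lam).const_mul lam
  have hν_top : relEnt ν μ₀ ≠ ∞ := by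
    rw [relEnt_eq_klDiv, klDiv_tilted_left_self (hM lam) hν]
    exact ENNReal.ofReal_ne_top
  refine ⟨lam, hlam, fun μ _ hμ hμa => ?_⟩
  have hx : Integrable (fun x => lam * x) μ :=
    ((integrable_norm_iff aestronglyMeasurable_id).1 (by simpa using hμ)).const_mul lam
  have hpyth : relEnt μ μ₀ = relEnt μ ν + relEnt ν μ₀ := by
    simp only [relEnt_eq_klDiv]
    refine klDiv_eq_klDiv_tilted_right_add (hM lam) hx hν ?_
    rw [integral_const_mul, integral_const_mul, hμa, hlam]
  refine ⟨hpyth, hpyth ▸ le_add_self, fun h_eq => ?_⟩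
  have h_zero : relEnt μ ν = 0 :=
    (ENNReal.add_left_inj hν_top).1 (by rw [zero_add, ← hpyth, h_eq])
  rwa [relEnt_eq_klDiv, klDiv_eq_zero_iff] at h_zero
end

section
/- Fix n, tr ∈ ℕ and a renewal process S with return-time law K^{tr} supported on {1,…,tr}. For β̄ = (β₀,…,β_{n−1}) ∈ [0,∞)^n and x̄ ∈ ℝ^n set k(β̄, x̄) := E_{K^{tr}}[ ∏_{k ∈ J_n} e^{β_k x_k}/M(β_k) ], where J_n = {0 ≤ k < n : S_k = 0} (with 0 ∈ J_n). Then the function f(β̄) := ∫ k(β̄,x̄) log k(β̄,x̄) dμ₀^{⊗n}(x̄) is non-decreasing in each coordinate β_j on [0,∞)^n. -/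
/-!
Write `k_b = ∑_F w_F ∏_{k ∈ F} q_{b_k}(x_k)` with `q_β(y) = e^{β y} / M(β)` and renewal weights
`w_F ≥ 0`. Convexity of `t log t` gives
`∫ k_c log k_c - ∫ k_b log k_b ≥ ∫ (1 + log k_b) (k_c - k_b)`, and `∫ k_b = ∫ k_c = ∑_F w_F`
removes the constant term. If only the `j`-th parameter moves, then on each fibre of the `j`-th
coordinate `k_b = A + B q_{b_j}(x_j)` and `k_c = A + B q_{c_j}(x_j)` with `B ≥ 0`. Since
`b_j ≥ 0`, `log k_b` is non-decreasing in `x_j`, while `q_{c_j} - q_{b_j}` has integral zero and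
changes sign once, from negative to positive (monotone likelihood ratio); Chebyshev's correlation
inequality makes the fibre integral of `log k_b (k_c - k_b)` nonnegative. All functions involved
lie in every `Lᵖ` because `μ₀` has all exponential moments.
-/

open MeasureTheory Filter Real Set
open scoped ENNReal NNReal Topology

/-- The probability that the renewal set of a renewal process with return-time law `K`,
observed on the time window `{0,…,n}` (and containing the initial renewal `0`), equals the
finite set `F`: the product of `K` over the consecutive gaps of `F`, times the probability
that no further renewal occurs before time `n`. -/
noncomputable def renewalWeight (K : ℕ → ℝ) (n : ℕ) (F : Finset (Fin (n + 1))) : ℝ :=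
  if (0 : Fin (n + 1)) ∈ F then
    (let l := F.sort (· ≤ ·)
     (List.zipWith (fun a b : Fin (n + 1) => K (b.val - a.val)) l l.tail).prod *
       (1 - ∑ j ∈ Finset.range (n + 1 - ((l.map Fin.val).getLastD 0)), K j))
  else 0

/-- `k(β̄, x̄) = E_{K^{tr}}[ ∏_{k ∈ J_n} e^{β_k x_k}/M(β_k) ]`, the expectation over the
renewal set `J_n = {0 ≤ k ≤ n : S_k = 0}` (with `0 ∈ J_n`). -/
noncomputable def kfun (K : ℕ → ℝ) (μ₀ : Measure ℝ) (n : ℕ)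
    (b x : Fin (n + 1) → ℝ) : ℝ :=
  ∑ F ∈ (Finset.univ : Finset (Finset (Fin (n + 1)))),
    renewalWeight K n F *
      ∏ k ∈ F, Real.exp (b k * x k) / ∫ y, Real.exp (b k * y) ∂μ₀

noncomputable def tiltDensity (μ : Measure ℝ) (β y : ℝ) : ℝ :=
  exp (β * y) / ∫ z, exp (β * z) ∂μ

-- `kfun K μ₀ n` is definitionally `tiltMixture μ₀ (renewalWeight K n)`.
noncomputable def tiltMixture {ι : Type*} [Fintype ι] (μ : Measure ℝ) (w : Finset ι → ℝ)
    (b x : ι → ℝ) : ℝ :=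
  ∑ F, w F * ∏ k ∈ F, tiltDensity μ (b k) (x k)

section TiltDensity

variable {μ : Measure ℝ} {β γ : ℝ}

lemma tiltDensity_nonneg (β y : ℝ) : 0 ≤ tiltDensity μ β y :=
  div_nonneg (exp_pos _).le (integral_nonneg fun _ => (exp_pos _).le)

lemma integrable_tiltDensity (hβ : Integrable (fun y => exp (β * y)) μ) :
    Integrable (tiltDensity μ β) μ :=
  hβ.div_const _

lemma monotone_tiltDensity (hβ : 0 ≤ β) : Monotone (tiltDensity μ β) := fun y z hyz => by
  unfold tiltDensity
  gcongr

variable [NeZero μ]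

lemma tiltDensity_pos (hβ : Integrable (fun y => exp (β * y)) μ) (y : ℝ) :
    0 < tiltDensity μ β y :=
  div_pos (exp_pos _) (integral_exp_pos hβ)

lemma integral_tiltDensity (hβ : Integrable (fun y => exp (β * y)) μ) :
    ∫ y, tiltDensity μ β y ∂μ = 1 := by
  simp only [tiltDensity]
  rw [integral_div, div_self (integral_exp_pos hβ).ne']

lemma log_tiltDensity (hβ : Integrable (fun y => exp (β * y)) μ) (y : ℝ) :
    log (tiltDensity μ β y) = β * y - log (∫ z, exp (β * z) ∂μ) := by
  rw [tiltDensity.eq_def, log_div (exp_ne_zero _) (integral_exp_pos hβ).ne', log_exp]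

/-- The likelihood ratio `tiltDensity μ γ / tiltDensity μ β` is monotone. -/
lemma exists_tiltDensity_crossing (hβ : Integrable (fun y => exp (β * y)) μ)
    (hγ : Integrable (fun y => exp (γ * y)) μ) (hβγ : β ≤ γ) :
    ∃ y₀, ∀ y, (y ≤ y₀ → tiltDensity μ γ y ≤ tiltDensity μ β y) ∧
      (y₀ ≤ y → tiltDensity μ β y ≤ tiltDensity μ γ y) := by
  rcases hβγ.eq_or_lt with rfl | hlt
  · exact ⟨0, fun y => ⟨fun _ => le_rfl, fun _ => le_rfl⟩⟩
  set Lβ := log (∫ z, exp (β * z) ∂μ)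
  set Lγ := log (∫ z, exp (γ * z) ∂μ)
  have hγβ : 0 < γ - β := sub_pos.2 hlt
  refine ⟨(Lγ - Lβ) / (γ - β), fun y => ⟨fun hy => ?_, fun hy => ?_⟩⟩
  · rw [← log_le_log_iff (tiltDensity_pos hγ y) (tiltDensity_pos hβ y), log_tiltDensity hγ,
      log_tiltDensity hβ]
    rw [le_div_iff₀ hγβ] at hy
    linarith
  · rw [← log_le_log_iff (tiltDensity_pos hβ y) (tiltDensity_pos hγ y), log_tiltDensity hγ,
      log_tiltDensity hβ]
    rw [div_le_iff₀ hγβ] at hy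
    linarith

end TiltDensity

/-- Chebyshev's correlation inequality: pointwise `0 ≤ (φ y - φ y₀) * ψ y`. -/
lemma integral_mul_nonneg_of_monotone_of_sign_change {α : Type*} [LinearOrder α]
    [MeasurableSpace α] {μ : Measure α} {φ ψ : α → ℝ} (hφ : Monotone φ) {y₀ : α}
    (hψ_le : ∀ y ≤ y₀, ψ y ≤ 0) (hψ_ge : ∀ y, y₀ ≤ y → 0 ≤ ψ y) (hψ : Integrable ψ μ)
    (hψ_zero : ∫ y, ψ y ∂μ = 0) (hφψ : Integrable (fun y => φ y * ψ y) μ) :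
    0 ≤ ∫ y, φ y * ψ y ∂μ := by
  have hsign : ∀ y, 0 ≤ (φ y - φ y₀) * ψ y := fun y => by
    rcases le_total y y₀ with h | h
    · exact mul_nonneg_of_nonpos_of_nonpos (sub_nonpos.2 (hφ h)) (hψ_le y h)
    · exact mul_nonneg (sub_nonneg.2 (hφ h)) (hψ_ge y h)
  calc 0 ≤ ∫ y, (φ y - φ y₀) * ψ y ∂μ := integral_nonneg hsign
    _ = ∫ y, φ y * ψ y ∂μ - φ y₀ * ∫ y, ψ y ∂μ := by
      simp_rw [sub_mul]
      rw [integral_sub hφψ (hψ.const_mul _), integral_const_mul]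
    _ = ∫ y, φ y * ψ y ∂μ := by rw [hψ_zero, mul_zero, sub_zero]

lemma integral_log_mul_sub_nonneg_of_tiltDensity {μ : Measure ℝ} [IsProbabilityMeasure μ]
    {β γ : ℝ} (hβi : Integrable (fun y => exp (β * y)) μ)
    (hγi : Integrable (fun y => exp (γ * y)) μ) (hβ : 0 ≤ β) (hβγ : β ≤ γ) {A B : ℝ}
    (hB : 0 ≤ B) (hpos : ∀ y, 0 < A + B * tiltDensity μ β y)
    (hint : Integrable (fun y => log (A + B * tiltDensity μ β y) *
      (A + B * tiltDensity μ γ y - (A + B * tiltDensity μ β y))) μ) :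
    0 ≤ ∫ y, log (A + B * tiltDensity μ β y) *
      (A + B * tiltDensity μ γ y - (A + B * tiltDensity μ β y)) ∂μ := by
  obtain ⟨y₀, hy₀⟩ := exists_tiltDensity_crossing hβi hγi hβγ
  have haffine : ∀ {δ : ℝ}, Integrable (fun y => exp (δ * y)) μ →
      Integrable (fun y => A + B * tiltDensity μ δ y) μ := fun hδ =>
    (integrable_const A).add ((integrable_tiltDensity hδ).const_mul B)
  refine integral_mul_nonneg_of_monotone_of_sign_change
    (fun y z hyz => log_le_log (hpos y) ?_) (y₀ := y₀) (fun y hy => sub_nonpos.2 ?_)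
    (fun y hy => sub_nonneg.2 ?_) ((haffine hγi).sub (haffine hβi)) ?_ hint
  · gcongr
    exact monotone_tiltDensity hβ hyz
  · gcongr
    exact (hy₀ y).1 hy
  · gcongr
    exact (hy₀ y).2 hy
  · rw [integral_sub (haffine hγi) (haffine hβi), integral_add (integrable_const A)
      ((integrable_tiltDensity hγi).const_mul B), integral_add (integrable_const A)
      ((integrable_tiltDensity hβi).const_mul B), integral_const_mul, integral_const_mul,
      integral_tiltDensity hγi, integral_tiltDensity hβi, sub_self]

lemma mul_log_add_deriv_mul_sub_le {s t : ℝ} (hs : 0 ≤ s) (ht : 0 < t) :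
    t * log t + (1 + log t) * (s - t) ≤ s * log s := by
  rcases hs.eq_or_lt with rfl | hs
  · rw [zero_mul]
    linarith
  have h := one_sub_inv_le_log_of_pos (div_pos hs ht)
  rw [log_div hs.ne' ht.ne', inv_div] at h
  have h' := mul_le_mul_of_nonneg_left h hs.le
  rw [mul_sub, mul_one, mul_div_cancel₀ _ hs.ne'] at h'
  nlinarith

/-- Integrated tangent-line bound for `t log t`; the `∫ (g - f)` part vanishes by `hmass`. -/
lemma integral_mul_log_le_of_integral_log_mul_sub_nonneg {α : Type*} [MeasurableSpace α]
    {P : Measure α} {f g : α → ℝ} (hf : ∀ x, 0 < f x) (hg : ∀ x, 0 ≤ g x)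
    (hfi : Integrable f P) (hgi : Integrable g P)
    (hflog : Integrable (fun x => f x * log (f x)) P)
    (hglog : Integrable (fun x => g x * log (g x)) P)
    (hcross : Integrable (fun x => log (f x) * (g x - f x)) P)
    (hmass : ∫ x, f x ∂P = ∫ x, g x ∂P) (hcorr : 0 ≤ ∫ x, log (f x) * (g x - f x) ∂P) :
    ∫ x, f x * log (f x) ∂P ≤ ∫ x, g x * log (g x) ∂P := by
  have hsub : Integrable (fun x => g x - f x) P := hgi.sub hfi
  have hlin : Integrable (fun x => log (f x) * (g x - f x) + (g x - f x)) P := hcross.add hsub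
  have htangent : ∫ x, f x * log (f x) + (log (f x) * (g x - f x) + (g x - f x)) ∂P
      ≤ ∫ x, g x * log (g x) ∂P :=
    integral_mono (hflog.add hlin) hglog fun x => by
      have := mul_log_add_deriv_mul_sub_le (hg x) (hf x)
      linarith
  rw [integral_add hflog hlin, integral_add hcross hsub, integral_sub hgi hfi, hmass, sub_self,
    add_zero] at htangent
  linarith

lemma integral_nonneg_of_integral_insertNth_nonneg {α : Type*} [MeasurableSpace α]
    {μ : Measure α} [SigmaFinite μ] {n : ℕ} {g : (Fin (n + 1) → α) → ℝ}
    (hg : Integrable g (Measure.pi fun _ => μ)) (j : Fin (n + 1))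
    (h : ∀ x' : Fin n → α, Integrable (fun y => g (Fin.insertNth j y x')) μ →
      0 ≤ ∫ y, g (Fin.insertNth j y x') ∂μ) :
    0 ≤ ∫ x, g x ∂(Measure.pi fun _ => μ) := by
  set e := (MeasurableEquiv.piFinSuccAbove (fun _ : Fin (n + 1) => α) j).symm
  have he : MeasurePreserving e (μ.prod (Measure.pi fun _ => μ)) (Measure.pi fun _ => μ) :=
    (measurePreserving_piFinSuccAbove (fun _ => μ) j).symm
  have hg' := (he.integrable_comp_emb e.measurableEmbedding).2 hg
  rw [← he.integral_comp', integral_prod_symm (fun z => g (e z)) hg']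
  refine integral_nonneg_of_ae (hg'.prod_left_ae.mono fun x' hx' => ?_)
  have he_apply : ∀ z, e z = Fin.insertNth j z.1 z.2 := fun z => by
    simp [e, MeasurableEquiv.piFinSuccAbove_symm_apply, Fin.insertNthEquiv]
  simp only [he_apply] at hx' ⊢
  exact h x' hx'

def MemLpAll {α : Type*} [MeasurableSpace α] (f : α → ℝ) (μ : Measure α) : Prop :=
  ∀ p : ℝ≥0, MemLp f p μ

namespace MemLpAll

variable {α : Type*} [MeasurableSpace α] {μ : Measure α} {f g : α → ℝ}

lemma const [IsFiniteMeasure μ] (c : ℝ) : MemLpAll (fun _ => c) μ := fun _ => memLp_const c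

lemma add (hf : MemLpAll f μ) (hg : MemLpAll g μ) : MemLpAll (fun x => f x + g x) μ :=
  fun p => (hf p).add (hg p)

lemma sub (hf : MemLpAll f μ) (hg : MemLpAll g μ) : MemLpAll (fun x => f x - g x) μ :=
  fun p => (hf p).sub (hg p)

lemma abs (hf : MemLpAll f μ) : MemLpAll (fun x => |f x|) μ := fun p => (hf p).abs

lemma const_mul (hf : MemLpAll f μ) (c : ℝ) : MemLpAll (fun x => c * f x) μ :=
  fun p => (hf p).const_mul c

/-- Hölder with exponents `2p, 2p, p`. -/
lemma mul (hf : MemLpAll f μ) (hg : MemLpAll g μ) : MemLpAll (fun x => f x * g x) μ := by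
  intro p
  have : ENNReal.HolderTriple ((2 * p : ℝ≥0) : ℝ≥0∞) ((2 * p : ℝ≥0) : ℝ≥0∞) p := by
    constructor
    rw [ENNReal.coe_mul, ENNReal.mul_inv (by simp) (by simp), ← two_mul, ← mul_assoc]
    norm_num [ENNReal.mul_inv_cancel]
  exact (hg (2 * p)).mul' (hf (2 * p))

lemma finset_sum {ι : Type*} (s : Finset ι) {f : ι → α → ℝ} (hf : ∀ i ∈ s, MemLpAll (f i) μ) :
    MemLpAll (fun x => ∑ i ∈ s, f i x) μ :=
  fun p => memLp_finsetSum s fun i hi => hf i hi p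

lemma finset_prod [IsFiniteMeasure μ] {ι : Type*} (s : Finset ι) {f : ι → α → ℝ}
    (hf : ∀ i ∈ s, MemLpAll (f i) μ) : MemLpAll (fun x => ∏ i ∈ s, f i x) μ := by
  classical
  induction s using Finset.induction_on with
  | empty => simpa using const 1
  | insert i s hi ih =>
    simp_rw [Finset.prod_insert hi]
    exact (hf i (Finset.mem_insert_self i s)).mul
      (ih fun k hk => hf k (Finset.mem_insert_of_mem hk))

lemma of_abs_le (hg : MemLpAll g μ) (hf : AEStronglyMeasurable f μ) (hfg : ∀ x, |f x| ≤ g x) :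
    MemLpAll f μ :=
  fun p => (hg p).of_le hf (ae_of_all _ fun x => (hfg x).trans (le_abs_self _))

lemma integrable [IsFiniteMeasure μ] (hf : MemLpAll f μ) : Integrable f μ :=
  memLp_one_iff_integrable.1 (by simpa using hf 1)

lemma comp_eval [IsProbabilityMeasure μ] {ι : Type*} [Fintype ι] (hf : MemLpAll f μ) (i : ι) :
    MemLpAll (fun x : ι → α => f (x i)) (Measure.pi fun _ => μ) :=
  fun p => (hf p).comp_measurePreserving (measurePreserving_eval _ i)

end MemLpAll

section ExpMoments

variable {μ : Measure ℝ} (hM : ∀ t, Integrable (fun y => exp (t * y)) μ)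
include hM

lemma memLpAll_id : MemLpAll id μ := by
  have : ProbabilityTheory.integrableExpSet id μ = univ := eq_univ_of_forall hM
  exact ProbabilityTheory.memLp_of_mem_interior_integrableExpSet (by simp [this])

lemma memLpAll_tiltDensity (β : ℝ) : MemLpAll (tiltDensity μ β) μ := by
  intro p
  have hmeas := (integrable_tiltDensity (hM β)).aestronglyMeasurable
  rcases eq_or_ne p 0 with rfl | hp
  · simpa using hmeas
  rw [← integrable_norm_rpow_iff hmeas (by simpa using hp) ENNReal.coe_ne_top]
  refine ((hM (p * β)).div_const ((∫ z, exp (β * z) ∂μ) ^ (p : ℝ))).congr (ae_of_all _ fun y => ?_)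
  simp only [norm_eq_abs, ENNReal.coe_toReal]
  rw [abs_of_nonneg (tiltDensity_nonneg β y)]
  unfold tiltDensity
  rw [div_rpow (exp_pos _).le (integral_nonneg fun _ => (exp_pos _).le), ← exp_mul]
  ring_nf

end ExpMoments

section TiltMixture

variable {ι : Type*} [Fintype ι] {μ : Measure ℝ} {w : Finset ι → ℝ}

lemma continuous_tiltMixture (μ : Measure ℝ) (w : Finset ι → ℝ) (b : ι → ℝ) :
    Continuous (tiltMixture μ w b) := by
  unfold tiltMixture tiltDensity
  fun_prop

lemma le_tiltMixture (hw : ∀ F, 0 ≤ w F) (F₀ : Finset ι) (b x : ι → ℝ) :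
    w F₀ * ∏ k ∈ F₀, tiltDensity μ (b k) (x k) ≤ tiltMixture μ w b x :=
  Finset.single_le_sum (f := fun F => w F * ∏ k ∈ F, tiltDensity μ (b k) (x k))
    (fun F _ => mul_nonneg (hw F) (Finset.prod_nonneg fun _ _ => tiltDensity_nonneg _ _))
    (Finset.mem_univ F₀)

variable [IsProbabilityMeasure μ] (hM : ∀ t, Integrable (fun y => exp (t * y)) μ)
include hM

lemma tiltMixture_pos (hw : ∀ F, 0 ≤ w F) {F₀ : Finset ι} (hF₀ : 0 < w F₀) (b x : ι → ℝ) :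
    0 < tiltMixture μ w b x :=
  (mul_pos hF₀ (Finset.prod_pos fun _ _ => tiltDensity_pos (hM _) _)).trans_le
    (le_tiltMixture hw F₀ b x)

lemma integral_tiltMixture (w : Finset ι → ℝ) (b : ι → ℝ) :
    ∫ x, tiltMixture μ w b x ∂(Measure.pi fun _ => μ) = ∑ F, w F := by
  classical
  have hterm : ∀ F : Finset ι, MemLpAll (fun x : ι → ℝ => ∏ k ∈ F, tiltDensity μ (b k) (x k))
      (Measure.pi fun _ => μ) := fun F =>
    MemLpAll.finset_prod F fun k _ => (memLpAll_tiltDensity hM (b k)).comp_eval k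
  unfold tiltMixture
  rw [integral_finsetSum _ fun F _ => ((hterm F).const_mul (w F)).integrable]
  refine Finset.sum_congr rfl fun F _ => ?_
  have hprod : ∀ x : ι → ℝ, ∏ k ∈ F, tiltDensity μ (b k) (x k) =
      ∏ k, if k ∈ F then tiltDensity μ (b k) (x k) else 1 := fun x => by
    rw [Finset.prod_ite_mem, Finset.univ_inter]
  simp_rw [integral_const_mul, hprod]
  rw [integral_fintype_prod_eq_prod (fun k y => if k ∈ F then tiltDensity μ (b k) y else 1)]
  have hone : ∀ k, ∫ y, (if k ∈ F then tiltDensity μ (b k) y else 1) ∂μ = 1 := fun k => by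
    split_ifs
    · exact integral_tiltDensity (hM _)
    · simp
  simp [hone]

lemma memLpAll_tiltMixture (w : Finset ι → ℝ) (b : ι → ℝ) :
    MemLpAll (tiltMixture μ w b) (Measure.pi fun _ => μ) :=
  MemLpAll.finset_sum _ fun F _ => (MemLpAll.finset_prod F fun k _ =>
    (memLpAll_tiltDensity hM (b k)).comp_eval k).const_mul (w F)

/-- `log` of the mixture lies between `log` of its `F₀`-term, which is affine in `x`, and the
mixture itself. -/
lemma memLpAll_log_tiltMixture (hw : ∀ F, 0 ≤ w F) {F₀ : Finset ι} (hF₀ : 0 < w F₀)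
    (b : ι → ℝ) :
    MemLpAll (fun x => log (tiltMixture μ w b x)) (Measure.pi fun _ => μ) := by
  set L : (ι → ℝ) → ℝ := fun x =>
    log (w F₀) + ∑ k ∈ F₀, (b k * x k - log (∫ z, exp (b k * z) ∂μ))
  have hpos := tiltMixture_pos hM hw hF₀ b
  have hL : ∀ x, L x ≤ log (tiltMixture μ w b x) := fun x => by
    have hterm := Finset.prod_pos fun k (_ : k ∈ F₀) => tiltDensity_pos (hM (b k)) (x k)
    refine le_of_eq_of_le ?_ (log_le_log (mul_pos hF₀ hterm) (le_tiltMixture hw F₀ b x))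
    rw [log_mul hF₀.ne' hterm.ne', log_prod fun k _ => (tiltDensity_pos (hM (b k)) (x k)).ne']
    simp_rw [log_tiltDensity (hM _)]
    rfl
  have hLmem : MemLpAll L (Measure.pi fun _ => μ) :=
    (MemLpAll.const _).add (MemLpAll.finset_sum F₀ fun k _ =>
      (((memLpAll_id hM).comp_eval k).const_mul (b k)).sub (MemLpAll.const _))
  refine ((memLpAll_tiltMixture hM w b).abs.add hLmem.abs).of_abs_le
    ((continuous_tiltMixture μ w b).log fun x => (hpos x).ne').aestronglyMeasurable
    fun x => abs_le.2 ⟨?_, ?_⟩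
  · linarith [hL x, neg_abs_le (L x), abs_nonneg (tiltMixture μ w b x)]
  · linarith [log_le_sub_one_of_pos (hpos x), le_abs_self (tiltMixture μ w b x),
      abs_nonneg (L x)]

end TiltMixture

section Monotone

variable {n : ℕ} {μ : Measure ℝ} {w : Finset (Fin (n + 1)) → ℝ}

lemma exists_tiltMixture_update_insertNth (hw : ∀ F, 0 ≤ w F) (b : Fin (n + 1) → ℝ)
    (j : Fin (n + 1)) (x' : Fin n → ℝ) :
    ∃ A B, 0 ≤ B ∧ ∀ β y, tiltMixture μ w (Function.update b j β) (Fin.insertNth j y x') =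
      A + B * tiltDensity μ β y := by
  set g : Fin (n + 1) → ℝ := fun k =>
    tiltDensity μ (b k) ((Fin.insertNth j 0 x' : Fin (n + 1) → ℝ) k)
  have hfactor : ∀ β y k, k ≠ j → tiltDensity μ (Function.update b j β k)
      ((Fin.insertNth j y x' : Fin (n + 1) → ℝ) k) = g k := by
    intro β y k hk
    obtain ⟨i, rfl⟩ := Fin.exists_succAbove_eq hk
    simp [g]
  refine ⟨∑ F, if j ∈ F then 0 else w F * ∏ k ∈ F, g k,
    ∑ F, if j ∈ F then w F * ∏ k ∈ F.erase j, g k else 0,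
    Finset.sum_nonneg fun F _ => ?_, fun β y => ?_⟩
  · split_ifs
    exacts [mul_nonneg (hw F) (Finset.prod_nonneg fun _ _ => tiltDensity_nonneg _ _), le_rfl]
  rw [Finset.sum_mul, ← Finset.sum_add_distrib]
  refine Finset.sum_congr rfl fun F _ => ?_
  split_ifs with hj
  · rw [← Finset.mul_prod_erase F _ hj, Finset.prod_congr rfl fun k hk =>
      hfactor β y k (Finset.ne_of_mem_erase hk)]
    simp only [Function.update_self, Fin.insertNth_apply_same]
    ring
  · rw [Finset.prod_congr rfl fun k hk => hfactor β y k (ne_of_mem_of_not_mem hk hj)]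
    ring

theorem integral_tiltMixture_mul_log_mono [IsProbabilityMeasure μ]
    (hM : ∀ t, Integrable (fun y => exp (t * y)) μ) (hw : ∀ F, 0 ≤ w F) (j : Fin (n + 1))
    {b c : Fin (n + 1) → ℝ} (hb : 0 ≤ b j) (hbc : b j ≤ c j) (hoff : ∀ i, i ≠ j → b i = c i) :
    ∫ x, tiltMixture μ w b x * log (tiltMixture μ w b x) ∂(Measure.pi fun _ => μ) ≤
      ∫ x, tiltMixture μ w c x * log (tiltMixture μ w c x) ∂(Measure.pi fun _ => μ) := by
  by_cases hw₀ : ∀ F, w F = 0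
  · simp [tiltMixture, hw₀]
  obtain ⟨F₀, hF₀⟩ := not_forall.1 hw₀
  have hF₀ : 0 < w F₀ := (hw F₀).lt_of_ne' hF₀
  have hpos := tiltMixture_pos hM hw hF₀
  have hb_mem := memLpAll_tiltMixture hM w b
  have hc_mem := memLpAll_tiltMixture hM w c
  have hlog_mem := memLpAll_log_tiltMixture hM hw hF₀ b
  have hcross := (hlog_mem.mul (hc_mem.sub hb_mem)).integrable
  refine integral_mul_log_le_of_integral_log_mul_sub_nonneg (hpos b) (fun x => (hpos c x).le)
    hb_mem.integrable hc_mem.integrable (hb_mem.mul hlog_mem).integrable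
    (hc_mem.mul (memLpAll_log_tiltMixture hM hw hF₀ c)).integrable hcross
    (by rw [integral_tiltMixture hM, integral_tiltMixture hM])
    (integral_nonneg_of_integral_insertNth_nonneg hcross j fun x' hint => ?_)
  obtain ⟨A, B, hB, hAB⟩ := exists_tiltMixture_update_insertNth (μ := μ) hw b j x'
  have hkb : ∀ y, tiltMixture μ w b (Fin.insertNth j y x') = A + B * tiltDensity μ (b j) y :=
    fun y => by rw [← hAB, Function.update_eq_self]
  have hkc : ∀ y, tiltMixture μ w c (Fin.insertNth j y x') = A + B * tiltDensity μ (c j) y :=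
    fun y => by rw [← hAB, ← Function.eq_update_iff.2 ⟨rfl, fun i hi => (hoff i hi).symm⟩]
  simp only [hkb, hkc] at hint ⊢
  exact integral_log_mul_sub_nonneg_of_tiltDensity (hM _) (hM _) hb hbc hB
    (fun y => hkb y ▸ hpos b _) hint

end Monotone

lemma renewalWeight_nonneg {K : ℕ → ℝ} {tr : ℕ} (hKpos : ∀ m, 0 ≤ K m)
    (hKsupp : ∀ m, m = 0 ∨ tr < m → K m = 0) (hKsum : ∑ m ∈ Finset.Icc 1 tr, K m = 1) (n : ℕ)
    (F : Finset (Fin (n + 1))) : 0 ≤ renewalWeight K n F := by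
  have hgaps : ∀ l : List (Fin (n + 1)),
      0 ≤ (List.zipWith (fun a b : Fin (n + 1) => K (b.val - a.val)) l l.tail).prod :=
    fun l => List.prod_nonneg fun a ha => by
      rw [← List.map_uncurry_zip_eq_zipWith] at ha
      obtain ⟨p, -, rfl⟩ := List.mem_map.1 ha
      exact hKpos _
  have hmass : ∀ m, ∑ i ∈ Finset.range m, K i ≤ 1 := fun m => by
    rw [← hKsum, ← Finset.sum_filter_of_ne (p := (· ∈ Finset.Icc 1 tr)) fun i _ hi => ?_]
    · exact Finset.sum_le_sum_of_subset_of_nonneg (fun i hi => (Finset.mem_filter.1 hi).2)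
        fun i _ _ => hKpos i
    · by_contra hout
      exact hi (hKsupp i (by simp only [Finset.mem_Icc, not_and_or, not_le] at hout; omega))
  unfold renewalWeight
  split_ifs
  exacts [mul_nonneg (hgaps _) (sub_nonneg.2 (hmass _)), le_rfl]

theorem stmt19_general (μ₀ : Measure ℝ) [IsProbabilityMeasure μ₀]
    (hM : ∀ lam : ℝ, Integrable (fun x => Real.exp (lam * x)) μ₀)
    (tr : ℕ) (K : ℕ → ℝ) (hKpos : ∀ m, 0 ≤ K m)
    (hKsupp : ∀ m, m = 0 ∨ tr < m → K m = 0)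
    (hKsum : ∑ m ∈ Finset.Icc 1 tr, K m = 1)
    (n : ℕ) (j : Fin (n + 1)) (b c : Fin (n + 1) → ℝ)
    (hb : ∀ i, 0 ≤ b i)
    (hbc : b j ≤ c j) (hoff : ∀ i, i ≠ j → b i = c i) :
    ∫ x, kfun K μ₀ n b x * Real.log (kfun K μ₀ n b x)
        ∂(Measure.pi fun _ : Fin (n + 1) => μ₀)
      ≤ ∫ x, kfun K μ₀ n c x * Real.log (kfun K μ₀ n c x)
        ∂(Measure.pi fun _ : Fin (n + 1) => μ₀) :=
  integral_tiltMixture_mul_log_mono hM (renewalWeight_nonneg hKpos hKsupp hKsum n) j (hb j) hbc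
    hoff

/-- Fix a horizon `n+1` and a renewal process with return-time law `K^{tr}`
supported on `{1,…,tr}`. For `β̄ ∈ [0,∞)^{n+1}` the function
`f(β̄) = ∫ k(β̄,x̄) log k(β̄,x̄) dμ₀^{⊗(n+1)}(x̄)` is non-decreasing in each coordinate
`β_j` on `[0,∞)^{n+1}`. -/
theorem stmt19 (μ₀ : Measure ℝ) [IsProbabilityMeasure μ₀]
    (hmean : ∫ x, x ∂μ₀ = 0)
    (hM : ∀ lam : ℝ, Integrable (fun x => Real.exp (lam * x)) μ₀)
    (tr : ℕ) (htr : 1 ≤ tr) (K : ℕ → ℝ) (hKpos : ∀ m, 0 ≤ K m)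
    (hKsupp : ∀ m, m = 0 ∨ tr < m → K m = 0)
    (hKsum : ∑ m ∈ Finset.Icc 1 tr, K m = 1)
    (n : ℕ) (j : Fin (n + 1)) (b c : Fin (n + 1) → ℝ)
    (hb : ∀ i, 0 ≤ b i) (hc : ∀ i, 0 ≤ c i)
    (hbc : b j ≤ c j) (hoff : ∀ i, i ≠ j → b i = c i) :
    ∫ x, kfun K μ₀ n b x * Real.log (kfun K μ₀ n b x)
        ∂(Measure.pi fun _ : Fin (n + 1) => μ₀)
      ≤ ∫ x, kfun K μ₀ n c x * Real.log (kfun K μ₀ n c x)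
        ∂(Measure.pi fun _ : Fin (n + 1) => μ₀) :=
  stmt19_general μ₀ hM tr K hKpos hKsupp hKsum n j b c hb hbc hoff
end
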